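/- (Abhyankar formula, general form) With F, H as above (F_i = x_i − H_i, H_i of order ≥ 2, j(F) = 1), for every U ∈ K[[x_1,...,x_n]] one has U = Σ_{p ∈ ℕ^n} ∂^p( U(F) · H^p ) / p!. -/

import Mathlib

/-!
STATEMENT 7 (Abhyankar formula, general form): With `Fᵢ = xᵢ − Hᵢ`, `Hᵢ` of
order ≥ 2 and `j(F) = 1`, every `U ∈ K[[x₁,…,xₙ]]` satisfies
`U = Σ_{p∈ℕⁿ} ∂^p ( U(F) · H^p ) / p!`.
-/

open MvPowerSeries

noncomputable section

variable {K : Type*} [Field K] [CharZero K] {n : ℕ}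

def dgF {n : ℕ} (μ : Fin n →₀ ℕ) : ℕ := μ.sum fun _ e => e

/-- the partial derivative `∂_a` of a multivariate power series -/
def pd (a : Fin n) (f : MvPowerSeries (Fin n) K) : MvPowerSeries (Fin n) K :=
  fun ν => ((ν a + 1 : ℕ) : K) * MvPowerSeries.coeff (ν + Finsupp.single a 1) f

/-- the iterated partial derivative `∂^j` -/
def Dmulti (j : Fin n → ℕ) (b : MvPowerSeries (Fin n) K) : MvPowerSeries (Fin n) K :=
  fun ν => (∏ i, (((ν i + j i).factorial / (ν i).factorial : ℕ) : K)) *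
    MvPowerSeries.coeff (ν + Finsupp.equivFunOnFinite.symm j) b

/-- substitution `f ↦ f(u₁,…,uₙ)` for `uᵢ` with zero constant term -/
def substF (u : Fin n → MvPowerSeries (Fin n) K) (f : MvPowerSeries (Fin n) K) :
    MvPowerSeries (Fin n) K :=
  fun μ => ∑ᶠ (p : Fin n → ℕ),
    MvPowerSeries.coeff (Finsupp.equivFunOnFinite.symm p) f *
      MvPowerSeries.coeff μ (∏ i, (u i) ^ (p i))

/-!
Write `T V = ∑ₚ ∂^p (V H^p) / p!`. Two commutation rules drive the proof. The Leibniz rule for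
divided derivatives gives `T ((xᵦ - Hᵦ) V) = xᵦ T V`, and the Leibniz rule for `∂ₖ (V H^p)` gives
`T (∂ₖ V) = ∂ₖ T V - ∑ⱼ ∂ⱼ T (∂ₖHⱼ V)`. The rows of the adjugate of the Jacobian matrix are
divergence free (Piola's identity) and, since `j(F) = 1`, invert the Jacobian matrix; feeding them
into the second rule yields `∂ₘ T 1 = 0` for every `m`, so `T 1 = 1`. The first rule then gives
`T (F^s) = x^s`, and because `T` does not decrease orders it commutes with the substitution sum
`U(F) = ∑ₛ Uₛ F^s`, whence `T (U(F)) = U`.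
-/

theorem Nat.succ_add_choose_mul (m q : ℕ) :
    (m + 1 + q).choose q * (m + 1) = (m + q).choose q * (m + q + 1) := by
  rw [Nat.choose_mul_succ_eq, show m + q + 1 - q = m + 1 by omega,
    show m + 1 + q = m + q + 1 by omega]

theorem Derivation.leibniz_finsetProd {R A ι : Type*} [CommSemiring R] [CommSemiring A]
    [Algebra R A] [DecidableEq ι] (D : Derivation R A A) (s : Finset ι) (f : ι → A) :
    D (∏ i ∈ s, f i) = ∑ i ∈ s, (∏ j ∈ s.erase i, f j) * D (f i) := by
  induction s using Finset.induction_on with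
  | empty => simp
  | insert x s hx ih =>
    rw [Finset.prod_insert hx, Derivation.leibniz, ih, Finset.sum_insert hx, Finset.erase_insert hx,
      Finset.smul_sum, add_comm]
    simp only [smul_eq_mul]
    congr 1
    refine Finset.sum_congr rfl fun i hi => ?_
    rw [Finset.erase_insert_of_ne (ne_of_mem_of_not_mem hi hx).symm,
      Finset.prod_insert fun h => hx (Finset.mem_of_mem_erase h)]
    ring

theorem Matrix.adjugate_apply_eq_sum_perm {ι A : Type*} [Fintype ι] [DecidableEq ι] [CommRing A]
    (M : Matrix ι ι A) (m k : ι) :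
    M.adjugate m k = ∑ τ : Equiv.Perm ι,
      if τ m = k then Equiv.Perm.sign τ • ∏ r ∈ Finset.univ.erase m, M (τ r) r else 0 := by
  rw [Matrix.adjugate_apply, Matrix.det_apply]
  refine Finset.sum_congr rfl fun τ _ => ?_
  split_ifs with h
  · rw [← Finset.mul_prod_erase _ _ (Finset.mem_univ m)]
    congr 1
    rw [Matrix.updateRow_apply, if_pos h, Pi.single_eq_same, one_mul]
    refine Finset.prod_congr rfl fun r hr => ?_
    rw [Matrix.updateRow_apply, if_neg]
    rw [← h]
    exact fun h' => Finset.ne_of_mem_erase hr (τ.injective h')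
  · rw [Finset.prod_eq_zero (i := τ.symm k) (Finset.mem_univ _), smul_zero]
    rw [Matrix.updateRow_apply, if_pos (τ.apply_symm_apply k), Pi.single_eq_of_ne]
    rintro rfl
    exact h (τ.apply_symm_apply k)

namespace MvPowerSeries

open Finsupp (single degree)

variable {σ R : Type*}

lemma eq_zero_or_exists_eq_add_single (μ : σ →₀ ℕ) (b : σ) :
    μ b = 0 ∨ ∃ ν, μ = ν + single b 1 := by
  refine or_iff_not_imp_left.2 fun h => ⟨μ - single b 1, (tsub_add_cancel_of_le ?_).symm⟩
  simpa [Finsupp.single_le_iff, Nat.one_le_iff_ne_zero] using h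

section CommSemiring

variable [CommSemiring R]

lemma coeff_add_single_X_mul (ν : σ →₀ ℕ) (b : σ) (W : MvPowerSeries σ R) :
    coeff (ν + single b 1) (X b * W) = coeff ν W := by
  rw [X_def, add_comm, coeff_add_monomial_mul, one_mul]

lemma coeff_X_mul_of_eq_zero {μ : σ →₀ ℕ} {b : σ} (h : μ b = 0) (W : MvPowerSeries σ R) :
    coeff μ (X b * W) = 0 := by
  rw [X_def, coeff_monomial_mul, if_neg]
  simp [Finsupp.single_le_iff, h]

lemma eq_zero_of_X_mul_eq_zero {b : σ} {f : MvPowerSeries σ R} (h : X b * f = 0) : f = 0 := by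
  ext ν
  rw [← coeff_add_single_X_mul ν b, h, map_zero, map_zero]

lemma pderiv_pderiv_comm (a b : σ) (f : MvPowerSeries σ R) :
    pderiv R a (pderiv R b f) = pderiv R b (pderiv R a f) := by
  ext μ
  simp only [coeff_pderiv, add_right_comm μ (single a 1) (single b 1)]
  rcases eq_or_ne a b with rfl | hab
  · rfl
  · simp [hab, hab.symm]
    ring

variable [Fintype σ]

lemma prod_pow_add_single (H : σ → MvPowerSeries σ R) (p : σ →₀ ℕ) (b : σ) :
    ∏ a, H a ^ (p + single b 1 : σ →₀ ℕ) a = H b * ∏ a, H a ^ p a := by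
  classical
  simp only [Finsupp.add_apply, pow_add, Finset.prod_mul_distrib, Finsupp.single_apply,
    pow_ite, pow_one, pow_zero, Finset.prod_ite_eq, Finset.mem_univ, if_true]
  ring

lemma pderiv_prod_pow [DecidableEq σ] (H : σ → MvPowerSeries σ R) (p : σ →₀ ℕ) (k : σ) :
    pderiv R k (∏ a, H a ^ p a)
      = ∑ j, p j • (pderiv R k (H j) * ∏ a, H a ^ (p - single j 1 : σ →₀ ℕ) a) := by
  rw [Derivation.leibniz_finsetProd]
  refine Finset.sum_congr rfl fun j _ => ?_
  have hrest : ∏ a ∈ Finset.univ.erase j, H a ^ (p - single j 1 : σ →₀ ℕ) a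
      = ∏ a ∈ Finset.univ.erase j, H a ^ p a :=
    Finset.prod_congr rfl fun a ha => by simp [Finset.ne_of_mem_erase ha]
  rw [← Finset.mul_prod_erase _ _ (Finset.mem_univ j), Derivation.leibniz_pow, hrest]
  simp only [Finsupp.tsub_apply, Finsupp.single_eq_same, smul_eq_mul, nsmul_eq_mul]
  ring

lemma le_order_prod_pow {k : ℕ} {H : σ → MvPowerSeries σ R} (hH : ∀ a, (k : ℕ∞) ≤ (H a).order)
    (p : σ →₀ ℕ) : ((k * p.degree : ℕ) : ℕ∞) ≤ (∏ a, H a ^ p a).order := by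
  refine le_trans ?_ (le_order_prod _ _)
  rw [Finsupp.degree_eq_sum, Finset.mul_sum, Nat.cast_sum]
  refine Finset.sum_le_sum fun a _ => le_trans ?_ (le_order_pow _)
  rw [mul_comm, Nat.cast_mul, nsmul_eq_mul]
  gcongr
  exact hH a

lemma prod_X_pow_eq_monomial (s : σ →₀ ℕ) : ∏ a, (X a : MvPowerSeries σ R) ^ s a = monomial s 1 := by
  simpa [Finsupp.prod_pow] using (monomial_eq (R := R) s fun _ => 1).symm

end CommSemiring

variable [CommRing R]

section DividedPDeriv

variable [Fintype σ]

/-- The coefficient of `x^μ` in `(∂^p / p!) x^(μ + p)`. -/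
def prodChoose (μ p : σ →₀ ℕ) : ℕ := ∏ a, (μ a + p a).choose (p a)

lemma prodChoose_zero_right (μ : σ →₀ ℕ) : prodChoose μ 0 = 1 := by
  simp [prodChoose]

lemma prodChoose_eq_choose_mul [DecidableEq σ] {μ p μ₀ p₀ : σ →₀ ℕ} (b : σ)
    (h : ∀ a ≠ b, μ a = μ₀ a ∧ p a = p₀ a) :
    prodChoose μ p
      = (μ b + p b).choose (p b) * ∏ a ∈ Finset.univ.erase b, (μ₀ a + p₀ a).choose (p₀ a) := by
  rw [prodChoose, ← Finset.mul_prod_erase _ _ (Finset.mem_univ b)]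
  congr 1
  refine Finset.prod_congr rfl fun a ha => ?_
  rw [(h a (Finset.ne_of_mem_erase ha)).1, (h a (Finset.ne_of_mem_erase ha)).2]

/-- The divided partial derivative `∂^p / p!`, defined coefficientwise so that it makes sense
over any commutative ring. -/
def dividedPDeriv (p : σ →₀ ℕ) : MvPowerSeries σ R →ₗ[R] MvPowerSeries σ R where
  toFun W μ := prodChoose μ p * coeff (μ + p) W
  map_add' V W := by ext μ; simp only [map_add, mul_add]; rfl
  map_smul' r W := by
    ext μ
    change (prodChoose μ p : R) * coeff (μ + p) (r • W) = r * (prodChoose μ p * coeff (μ + p) W)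
    rw [map_smul, smul_eq_mul, mul_left_comm]

lemma coeff_dividedPDeriv (p μ : σ →₀ ℕ) (W : MvPowerSeries σ R) :
    coeff μ (dividedPDeriv p W) = prodChoose μ p * coeff (μ + p) W := rfl

lemma dividedPDeriv_zero (W : MvPowerSeries σ R) : dividedPDeriv 0 W = W := by
  ext μ
  simp [coeff_dividedPDeriv, prodChoose_zero_right]

lemma coeff_dividedPDeriv_eq_zero_of_lt_order {p μ : σ →₀ ℕ} {W : MvPowerSeries σ R}
    (h : ((μ.degree + p.degree : ℕ) : ℕ∞) < W.order) : coeff μ (dividedPDeriv p W) = 0 := by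
  rw [coeff_dividedPDeriv, coeff_of_lt_order (by rwa [map_add]), mul_zero]

lemma pderiv_dividedPDeriv (k : σ) (p : σ →₀ ℕ) (W : MvPowerSeries σ R) :
    pderiv R k (dividedPDeriv p W) = dividedPDeriv p (pderiv R k W) := by
  classical
  ext μ
  simp only [coeff_pderiv, coeff_dividedPDeriv, add_right_comm μ p]
  rw [prodChoose_eq_choose_mul (μ₀ := μ) (p₀ := p) k fun a ha => by simp [ha],
    prodChoose_eq_choose_mul (μ₀ := μ) (p₀ := p) k fun _ _ => ⟨rfl, rfl⟩]
  have key := congrArg (Nat.cast : ℕ → R) (Nat.succ_add_choose_mul (μ k) (p k))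
  simp only [Finsupp.add_apply, Finsupp.single_eq_same]
  push_cast at key ⊢
  linear_combination (coeff (μ + single k 1 + p) W *
    ∏ a ∈ Finset.univ.erase k, ((μ a + p a).choose (p a) : R)) * key

lemma pderiv_dividedPDeriv_eq_nsmul (j : σ) (p : σ →₀ ℕ) (W : MvPowerSeries σ R) :
    pderiv R j (dividedPDeriv p W) = (p j + 1) • dividedPDeriv (p + single j 1) W := by
  classical
  ext μ
  simp only [coeff_pderiv, map_nsmul, coeff_dividedPDeriv, add_right_comm μ p, ← add_assoc]
  rw [prodChoose_eq_choose_mul (μ₀ := μ) (p₀ := p) j fun a ha => by simp [ha],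
    prodChoose_eq_choose_mul (μ₀ := μ) (p₀ := p) j fun a ha => by simp [ha]]
  have key : (μ j + 1 + p j).choose (p j) * (μ j + 1)
      = (μ j + (p j + 1)).choose (p j + 1) * (p j + 1) := by
    rw [Nat.succ_add_choose_mul, show μ j + (p j + 1) = μ j + p j + 1 by omega, mul_comm,
      Nat.add_one_mul_choose_eq]
  have keyR := congrArg (Nat.cast : ℕ → R) key
  simp only [Finsupp.add_apply, Finsupp.single_eq_same, nsmul_eq_mul]
  push_cast at keyR ⊢
  linear_combination (coeff (μ + single j 1 + p) W *
    ∏ a ∈ Finset.univ.erase j, ((μ a + p a).choose (p a) : R)) * keyR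

lemma dividedPDeriv_X_mul_of_eq_zero {p : σ →₀ ℕ} {b : σ} (hp : p b = 0)
    (W : MvPowerSeries σ R) : dividedPDeriv p (X b * W) = X b * dividedPDeriv p W := by
  classical
  ext μ
  rcases eq_zero_or_exists_eq_add_single μ b with hμ | ⟨ν, rfl⟩
  · rw [coeff_X_mul_of_eq_zero hμ, coeff_dividedPDeriv,
      coeff_X_mul_of_eq_zero (by simp [hμ, hp]), mul_zero]
  · rw [coeff_add_single_X_mul, coeff_dividedPDeriv, coeff_dividedPDeriv, add_right_comm,
      coeff_add_single_X_mul,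
      prodChoose_eq_choose_mul (μ₀ := ν) (p₀ := p) b fun a ha => by simp [ha],
      prodChoose_eq_choose_mul (μ₀ := ν) (p₀ := p) b fun _ _ => ⟨rfl, rfl⟩]
    simp [hp]

/-- Pascal's rule, in the form of a Leibniz rule for `∂^p / p!`. -/
lemma dividedPDeriv_add_single_X_mul (p : σ →₀ ℕ) (b : σ) (W : MvPowerSeries σ R) :
    dividedPDeriv (p + single b 1) (X b * W)
      = X b * dividedPDeriv (p + single b 1) W + dividedPDeriv p W := by
  classical
  ext μ
  rw [map_add]
  rcases eq_zero_or_exists_eq_add_single μ b with hμ | ⟨ν, rfl⟩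
  · rw [coeff_X_mul_of_eq_zero hμ, zero_add, coeff_dividedPDeriv, coeff_dividedPDeriv,
      ← add_assoc, coeff_add_single_X_mul,
      prodChoose_eq_choose_mul (μ₀ := μ) (p₀ := p) b fun a ha => by simp [ha],
      prodChoose_eq_choose_mul (μ₀ := μ) (p₀ := p) b fun _ _ => ⟨rfl, rfl⟩]
    simp [hμ]
  · rw [coeff_add_single_X_mul, coeff_dividedPDeriv, coeff_dividedPDeriv, coeff_dividedPDeriv,
      ← add_assoc, ← add_assoc, coeff_add_single_X_mul, add_right_comm ν,
      prodChoose_eq_choose_mul (μ₀ := ν) (p₀ := p) b fun a ha => by simp [ha],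
      prodChoose_eq_choose_mul (μ₀ := ν) (p₀ := p) b fun a ha => by simp [ha],
      prodChoose_eq_choose_mul (μ₀ := ν) (p₀ := p) b fun a ha => by simp [ha]]
    simp only [Finsupp.add_apply, Finsupp.single_eq_same]
    rw [show ν b + 1 + (p b + 1) = ν b + (p b + 1) + 1 by omega, Nat.choose_succ_succ',
      show ν b + (p b + 1) = ν b + 1 + p b by omega]
    push_cast
    ring

end DividedPDeriv

section CoeffFinsum

variable {ι κ : Type*}

def CoeffFinite (f : ι → MvPowerSeries σ R) : Prop :=
  ∀ μ, Function.HasFiniteSupport fun i => coeff μ (f i)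

/-- The coefficientwise sum of a family; it is the sum of `f` only when `CoeffFinite f`. -/
def coeffFinsum (f : ι → MvPowerSeries σ R) : MvPowerSeries σ R :=
  fun μ => ∑ᶠ i, coeff μ (f i)

lemma coeff_coeffFinsum (f : ι → MvPowerSeries σ R) (μ : σ →₀ ℕ) :
    coeff μ (coeffFinsum f) = ∑ᶠ i, coeff μ (f i) := rfl

variable {f g : ι → MvPowerSeries σ R}

lemma CoeffFinite.sum {f : κ → ι → MvPowerSeries σ R} (s : Finset κ)
    (hf : ∀ k, CoeffFinite (f k)) : CoeffFinite fun i => ∑ k ∈ s, f k i := by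
  intro μ
  simpa only [map_sum] using Function.HasFiniteSupport.sum (fun k => hf k μ) s

lemma CoeffFinite.mul_left (hf : CoeffFinite f) (h : MvPowerSeries σ R) :
    CoeffFinite fun i => h * f i := by
  classical
  intro μ
  simpa only [coeff_mul] using Function.HasFiniteSupport.sum
    (fun x : (σ →₀ ℕ) × (σ →₀ ℕ) => (hf x.2).fun_mul_right fun _ => coeff x.1 h) _

lemma CoeffFinite.pderiv (hf : CoeffFinite f) (k : σ) :
    CoeffFinite fun i => pderiv R k (f i) := by
  intro μ
  simpa only [coeff_pderiv] using (hf (μ + single k 1)).fun_mul_left _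

lemma coeffFinsum_add (hf : CoeffFinite f) (hg : CoeffFinite g) :
    coeffFinsum (fun i => f i + g i) = coeffFinsum f + coeffFinsum g := by
  ext μ
  simp only [coeff_coeffFinsum, map_add, finsum_add_distrib (hf μ) (hg μ)]

lemma coeffFinsum_sub (hf : CoeffFinite f) (hg : CoeffFinite g) :
    coeffFinsum (fun i => f i - g i) = coeffFinsum f - coeffFinsum g := by
  ext μ
  simp only [coeff_coeffFinsum, map_sub, finsum_sub_distrib (hf μ) (hg μ)]

lemma coeffFinsum_smul (hf : CoeffFinite f) (r : R) :
    coeffFinsum (fun i => r • f i) = r • coeffFinsum f := by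
  ext μ
  simp only [coeff_coeffFinsum, map_smul, smul_eq_mul, mul_finsum' _ _ (hf μ)]

lemma coeffFinsum_sum {f : κ → ι → MvPowerSeries σ R} (s : Finset κ)
    (hf : ∀ k, CoeffFinite (f k)) :
    coeffFinsum (fun i => ∑ k ∈ s, f k i) = ∑ k ∈ s, coeffFinsum (f k) := by
  ext μ
  simp only [coeff_coeffFinsum, map_sum, finsum_sum_comm s _ fun k _ => hf k μ]

lemma mul_coeffFinsum (hf : CoeffFinite f) (h : MvPowerSeries σ R) :
    h * coeffFinsum f = coeffFinsum fun i => h * f i := by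
  classical
  ext μ
  simp only [coeff_coeffFinsum, coeff_mul, finsum_sum_comm _ _ fun (x : (σ →₀ ℕ) × (σ →₀ ℕ)) _ =>
    (hf x.2).fun_mul_right fun _ => coeff x.1 h]
  exact Finset.sum_congr rfl fun x _ => mul_finsum' _ _ (hf x.2)

lemma pderiv_coeffFinsum (hf : CoeffFinite f) (k : σ) :
    pderiv R k (coeffFinsum f) = coeffFinsum fun i => pderiv R k (f i) := by
  ext μ
  simp only [coeff_pderiv, coeff_coeffFinsum, finsum_mul' _ _ (hf _)]

lemma coeffFinsum_comp_add_single {f : (σ →₀ ℕ) → MvPowerSeries σ R} (b : σ)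
    (hf : ∀ p, p b = 0 → f p = 0) :
    coeffFinsum (fun q => f (q + single b 1)) = coeffFinsum f := by
  ext μ
  simp only [coeff_coeffFinsum]
  rw [← finsum_mem_range (f := fun p => coeff μ (f p)) (add_left_injective (single b 1)),
    ← finsum_mem_univ (fun p => coeff μ (f p))]
  refine finsum_mem_inter_support_eq' _ _ _ fun p hp => ?_
  rcases eq_zero_or_exists_eq_add_single p b with h | ⟨q, rfl⟩
  · simp [hf p h] at hp
  · simp

lemma coeffFinite_comp_add_single_iff {f : (σ →₀ ℕ) → MvPowerSeries σ R} (b : σ)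
    (hf : ∀ p, p b = 0 → f p = 0) :
    CoeffFinite (fun q => f (q + single b 1)) ↔ CoeffFinite f := by
  refine ⟨fun h μ => ((h μ).image (· + single b 1)).subset fun p hp => ?_,
    fun h μ => (h μ).comp_of_injective (g := (· + single b 1)) (add_left_injective _)⟩
  rcases eq_zero_or_exists_eq_add_single p b with h0 | ⟨q, rfl⟩
  · simp [hf p h0] at hp
  · exact ⟨q, hp, rfl⟩

end CoeffFinsum

lemma sum_pderiv_adjugate_jacobian [Fintype σ] [DecidableEq σ] (F : σ → MvPowerSeries σ R)
    (m : σ) : ∑ k, pderiv R k ((Matrix.of fun k j => pderiv R k (F j)).adjugate m k) = 0 := by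
  set P : Equiv.Perm σ → MvPowerSeries σ R := fun τ =>
    ∏ r ∈ Finset.univ.erase m, pderiv R (τ r) (F r)
  have hk : ∀ τ : Equiv.Perm σ, ∑ k, pderiv R k (if τ m = k then Equiv.Perm.sign τ • P τ else 0)
      = Equiv.Perm.sign τ • pderiv R (τ m) (P τ) := by
    intro τ
    simp only [apply_ite (pderiv R _), map_zero, Finset.sum_ite_eq, Finset.mem_univ, if_true,
      Units.smul_def, map_zsmul]
  simp only [Matrix.adjugate_apply_eq_sum_perm, Matrix.of_apply, map_sum]
  rw [Finset.sum_comm, Finset.sum_congr rfl fun τ _ => hk τ]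
  simp only [P, Derivation.leibniz_finsetProd, Finset.smul_sum]
  rw [Finset.sum_comm]
  refine Finset.sum_eq_zero fun r hr => ?_
  have hrm : r ≠ m := Finset.ne_of_mem_erase hr
  -- the terms of `τ` and `τ * swap m r` cancel, by symmetry of second derivatives
  refine Finset.sum_ninvolution (· * Equiv.swap m r) (fun τ => ?_) (fun τ _ h => hrm ?_)
    (fun _ => Finset.mem_univ _) (fun τ => by simp [mul_assoc])
  · have hsign : Equiv.Perm.sign (τ * Equiv.swap m r) = -Equiv.Perm.sign τ := by
      rw [Equiv.Perm.sign_mul, Equiv.Perm.sign_swap hrm.symm, mul_neg, mul_one]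
    have hprod : ∏ s ∈ (Finset.univ.erase m).erase r, pderiv R ((τ * Equiv.swap m r) s) (F s)
        = ∏ s ∈ (Finset.univ.erase m).erase r, pderiv R (τ s) (F s) :=
      Finset.prod_congr rfl fun s hs => by
        rw [Equiv.Perm.mul_apply, Equiv.swap_apply_of_ne_of_ne
          (Finset.ne_of_mem_erase (Finset.mem_of_mem_erase hs)) (Finset.ne_of_mem_erase hs)]
    rw [hsign, hprod, Equiv.Perm.mul_apply, Equiv.Perm.mul_apply, Equiv.swap_apply_left,
      Equiv.swap_apply_right, pderiv_pderiv_comm (τ r), Units.neg_smul, add_neg_cancel]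
  · simpa using congrArg (· m) h

lemma one_le_order_X_sub {H : σ → MvPowerSeries σ R} (hH : ∀ a, 2 ≤ (H a).order) (a : σ) :
    1 ≤ (X a - H a).order := by
  rw [one_le_order_iff_constCoeff_eq_zero, map_sub, constantCoeff_X,
    ← coeff_zero_eq_constantCoeff_apply, coeff_of_lt_order, sub_zero]
  exact lt_of_lt_of_le (by norm_num) (hH a)

variable [Fintype σ]

lemma coeff_subst_eq_sum {F : σ → MvPowerSeries σ R} (hF : ∀ a, 1 ≤ (F a).order)
    (U : MvPowerSeries σ R) {N : ℕ} {d : σ →₀ ℕ} (hd : d.degree ≤ N) :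
    coeff d (subst F U)
      = ∑ s ∈ (Finsupp.finite_of_degree_le N).toFinset, coeff s U * coeff d (∏ a, F a ^ s a) := by
  have hsubst : HasSubst F :=
    hasSubst_of_constantCoeff_zero fun a => one_le_order_iff_constCoeff_eq_zero.1 (hF a)
  rw [coeff_subst hsubst]
  simp only [Finsupp.prod_fintype _ _ fun _ => pow_zero _, smul_eq_mul]
  refine finsum_eq_sum_of_support_subset _ fun s hs => ?_
  rw [Set.Finite.coe_toFinset, Set.mem_ofPred_eq]
  by_contra hlt
  refine hs (mul_eq_zero_of_right _ (coeff_of_lt_order ?_))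
  refine lt_of_lt_of_le ?_ (le_order_prod_pow (k := 1) (by exact_mod_cast hF) s)
  exact_mod_cast (hd.trans_lt (not_le.1 hlt)).trans_le (by rw [one_mul])

section AbhyankarOperator

variable {H : σ → MvPowerSeries σ R}

lemma coeff_dividedPDeriv_mul_prod_pow_eq_zero (hH : ∀ a, 2 ≤ (H a).order)
    {V : MvPowerSeries σ R} {p μ : σ →₀ ℕ} (h : (μ.degree : ℕ∞) < V.order + p.degree) :
    coeff μ (dividedPDeriv p (V * ∏ a, H a ^ p a)) = 0 := by
  refine coeff_dividedPDeriv_eq_zero_of_lt_order ?_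
  calc ((μ.degree + p.degree : ℕ) : ℕ∞) < V.order + p.degree + p.degree := by
        push_cast
        exact (ENat.add_lt_add_iff_right (ENat.natCast_ne_top _)).2 h
    _ = V.order + ((2 * p.degree : ℕ) : ℕ∞) := by push_cast; ring
    _ ≤ V.order + (∏ a, H a ^ p a).order :=
        add_le_add_right (le_order_prod_pow (k := 2) (by exact_mod_cast hH) p) _
    _ ≤ (V * ∏ a, H a ^ p a).order := le_order_mul

lemma coeffFinite_dividedPDeriv_mul_prod_pow (hH : ∀ a, 2 ≤ (H a).order)
    (V : MvPowerSeries σ R) : CoeffFinite fun p => dividedPDeriv p (V * ∏ a, H a ^ p a) :=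
  fun μ => (Finsupp.finite_of_degree_le μ.degree).subset fun p hp => by
    by_contra hle
    refine hp (coeff_dividedPDeriv_mul_prod_pow_eq_zero hH ?_)
    exact lt_of_lt_of_le (by exact_mod_cast not_le.1 hle) le_add_self

variable (H) in
/-- `abhyankarOp H hH V = ∑ₚ ∂^p (V H^p) / p!`. -/
def abhyankarOp (hH : ∀ a, 2 ≤ (H a).order) : MvPowerSeries σ R →ₗ[R] MvPowerSeries σ R where
  toFun V := coeffFinsum fun p => dividedPDeriv p (V * ∏ a, H a ^ p a)
  map_add' V W := by
    simp only [add_mul, map_add]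
    exact coeffFinsum_add (coeffFinite_dividedPDeriv_mul_prod_pow hH V)
      (coeffFinite_dividedPDeriv_mul_prod_pow hH W)
  map_smul' r V := by
    simp only [smul_mul_assoc, map_smul, RingHom.id_apply]
    exact coeffFinsum_smul (coeffFinite_dividedPDeriv_mul_prod_pow hH V) r

variable (hH : ∀ a, 2 ≤ (H a).order)
include hH

lemma abhyankarOp_apply (V : MvPowerSeries σ R) :
    abhyankarOp H hH V = coeffFinsum fun p => dividedPDeriv p (V * ∏ a, H a ^ p a) := rfl

lemma constantCoeff_abhyankarOp (V : MvPowerSeries σ R) :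
    constantCoeff (abhyankarOp H hH V) = constantCoeff V := by
  rw [← coeff_zero_eq_constantCoeff_apply, abhyankarOp_apply, coeff_coeffFinsum,
    finsum_eq_single _ 0 fun p hp => coeff_dividedPDeriv_mul_prod_pow_eq_zero hH ?_]
  · simp [dividedPDeriv_zero]
  · refine lt_of_lt_of_le ?_ le_add_self
    exact_mod_cast Nat.pos_of_ne_zero ((Finsupp.degree_eq_zero_iff p).not.2 hp)

lemma le_order_abhyankarOp (V : MvPowerSeries σ R) : V.order ≤ (abhyankarOp H hH V).order :=
  le_order fun _ hd => finsum_eq_zero_of_forall_eq_zero fun _ =>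
    coeff_dividedPDeriv_mul_prod_pow_eq_zero hH (lt_of_lt_of_le hd le_self_add)

lemma abhyankarOp_X_mul (b : σ) (V : MvPowerSeries σ R) :
    abhyankarOp H hH (X b * V) = X b * abhyankarOp H hH V + abhyankarOp H hH (H b * V) := by
  have hV := coeffFinite_dividedPDeriv_mul_prod_pow hH V
  rw [← sub_eq_iff_eq_add', abhyankarOp_apply, abhyankarOp_apply, mul_coeffFinsum hV,
    ← coeffFinsum_sub (coeffFinite_dividedPDeriv_mul_prod_pow hH _) (hV.mul_left _),
    ← coeffFinsum_comp_add_single b fun p hp => by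
      rw [mul_assoc, dividedPDeriv_X_mul_of_eq_zero hp, sub_self]]
  congr 1
  funext q
  rw [mul_assoc, dividedPDeriv_add_single_X_mul, add_sub_cancel_left, prod_pow_add_single,
    mul_left_comm, mul_assoc]

lemma abhyankarOp_sub_X_mul (b : σ) (V : MvPowerSeries σ R) :
    abhyankarOp H hH ((X b - H b) * V) = X b * abhyankarOp H hH V := by
  rw [sub_mul, map_sub, abhyankarOp_X_mul, add_sub_cancel_right]

lemma abhyankarOp_pow_sub_X_mul (b : σ) (k : ℕ) (V : MvPowerSeries σ R) :
    abhyankarOp H hH ((X b - H b) ^ k * V) = X b ^ k * abhyankarOp H hH V := by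
  induction k with
  | zero => simp
  | succ k ih => rw [pow_succ', mul_assoc, abhyankarOp_sub_X_mul, ih, ← mul_assoc, ← pow_succ']

lemma abhyankarOp_prod_pow_sub_X (s : σ →₀ ℕ) :
    abhyankarOp H hH (∏ a, (X a - H a) ^ s a) = (∏ a, X a ^ s a) * abhyankarOp H hH 1 := by
  classical
  suffices ∀ t : Finset σ, ∀ V, abhyankarOp H hH ((∏ a ∈ t, (X a - H a) ^ s a) * V)
      = (∏ a ∈ t, X a ^ s a) * abhyankarOp H hH V by simpa using this Finset.univ 1
  intro t
  induction t using Finset.induction_on with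
  | empty => simp
  | insert b t hb ih =>
    intro V
    rw [Finset.prod_insert hb, Finset.prod_insert hb, mul_assoc, abhyankarOp_pow_sub_X_mul, ih,
      mul_assoc]

lemma abhyankarOp_pderiv [DecidableEq σ] (k : σ) (V : MvPowerSeries σ R) :
    abhyankarOp H hH (pderiv R k V) = pderiv R k (abhyankarOp H hH V)
      - ∑ j, pderiv R j (abhyankarOp H hH (pderiv R k (H j) * V)) := by
  have hfin := coeffFinite_dividedPDeriv_mul_prod_pow hH
  set B : σ → (σ →₀ ℕ) → MvPowerSeries σ R := fun j p =>
    p j • dividedPDeriv p (pderiv R k (H j) * V * ∏ a, H a ^ (p - single j 1 : σ →₀ ℕ) a)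
  have hB0 : ∀ j p, p j = 0 → B j p = 0 := fun j p hp => by simp [B, hp]
  have hshift : ∀ j, (fun q => B j (q + single j 1))
      = fun q => pderiv R j (dividedPDeriv q (pderiv R k (H j) * V * ∏ a, H a ^ q a)) := by
    intro j
    funext q
    simp [B, pderiv_dividedPDeriv_eq_nsmul]
  have hBfin : ∀ j, CoeffFinite (B j) := fun j =>
    (coeffFinite_comp_add_single_iff j (hB0 j)).1 (by rw [hshift]; exact (hfin _).pderiv j)
  have hB : ∀ j, pderiv R j (abhyankarOp H hH (pderiv R k (H j) * V)) = coeffFinsum (B j) := by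
    intro j
    rw [abhyankarOp_apply, pderiv_coeffFinsum (hfin _), ← hshift,
      coeffFinsum_comp_add_single j (hB0 j)]
  have hAfin : CoeffFinite fun p => dividedPDeriv p (pderiv R k (V * ∏ a, H a ^ p a)) := by
    simpa only [pderiv_dividedPDeriv] using (hfin V).pderiv k
  rw [abhyankarOp_apply hH V, pderiv_coeffFinsum (hfin V), Finset.sum_congr rfl fun j _ => hB j,
    ← coeffFinsum_sum _ hBfin]
  simp only [pderiv_dividedPDeriv]
  rw [← coeffFinsum_sub hAfin (CoeffFinite.sum _ hBfin), abhyankarOp_apply]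
  congr 1
  funext p
  simp only [B, ← map_nsmul, ← map_sum, ← map_sub]
  congr 1
  have hV : ∀ j, V * (p j • (pderiv R k (H j) * ∏ a, H a ^ (p - single j 1 : σ →₀ ℕ) a))
      = p j • (pderiv R k (H j) * V * ∏ a, H a ^ (p - single j 1 : σ →₀ ℕ) a) := by
    intro j
    rw [mul_smul_comm, mul_left_comm, mul_assoc]
  rw [Derivation.leibniz, pderiv_prod_pow, smul_eq_mul, smul_eq_mul, Finset.mul_sum,
    Finset.sum_congr rfl fun j _ => hV j]
  ring

lemma abhyankarOp_sum_pderiv_mul [DecidableEq σ] (C : σ → MvPowerSeries σ R)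
    (W : MvPowerSeries σ R) :
    abhyankarOp H hH (∑ k, pderiv R k (C k * W))
      = ∑ j, pderiv R j (abhyankarOp H hH ((∑ k, C k * pderiv R k (X j - H j)) * W)) := by
  have hC : ∀ j, (∑ k, C k * pderiv R k (X j - H j)) * W
      = C j * W - ∑ k, pderiv R k (H j) * (C k * W) := by
    intro j
    have hX : ∑ k, C k * pderiv R k (X j) = C j := by simp [pderiv_X, Pi.single_apply]
    simp only [map_sub, mul_sub, Finset.sum_sub_distrib, hX, sub_mul, Finset.sum_mul]
    congr 1
    exact Finset.sum_congr rfl fun k _ => by ring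
  simp_rw [hC]
  simp only [map_sum, map_sub, abhyankarOp_pderiv hH, Finset.sum_sub_distrib]
  rw [Finset.sum_comm (γ := σ)]

lemma abhyankarOp_one [DecidableEq σ] [IsAddTorsionFree R]
    (hdet : (Matrix.of fun k j => pderiv R k (X j - H j)).det = 1) : abhyankarOp H hH 1 = 1 := by
  set A := Matrix.of fun k j => pderiv R k (X j - H j)
  have hcramer : ∀ m j, ∑ k, A.adjugate m k * pderiv R k (X j - H j) = if m = j then 1 else 0 := by
    intro m j
    have h := congrFun (congrFun (Matrix.adjugate_mul A) m) j
    rwa [Matrix.mul_apply, hdet, one_smul, Matrix.one_apply] at h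
  have hpderiv : ∀ m, pderiv R m (abhyankarOp H hH 1) = 0 := by
    intro m
    have hjacobi : ∑ k, pderiv R k (A.adjugate m k) = 0 :=
      sum_pderiv_adjugate_jacobian (fun j => X j - H j) m
    have hdiv : ∑ k, pderiv R k (A.adjugate m k * (X m - H m)) = 1 := by
      simp only [Derivation.leibniz, smul_eq_mul, Finset.sum_add_distrib, ← Finset.mul_sum,
        hjacobi, mul_zero, add_zero]
      simpa [mul_comm] using hcramer m m
    -- `T 1 = ∂ₘ T (Xₘ - Hₘ) = ∂ₘ (Xₘ T 1) = T 1 + Xₘ ∂ₘ T 1`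
    have key := abhyankarOp_sum_pderiv_mul hH (fun k => A.adjugate m k) (X m - H m)
    simp only [hdiv, hcramer, ite_mul, one_mul, zero_mul, apply_ite (abhyankarOp H hH),
      apply_ite (pderiv R _), map_zero, Finset.sum_ite_eq, Finset.mem_univ, if_true] at key
    have hF : abhyankarOp H hH (X m - H m) = X m * abhyankarOp H hH 1 := by
      simpa using abhyankarOp_sub_X_mul hH m 1
    rw [hF, Derivation.leibniz, pderiv_X_self, smul_eq_mul, smul_eq_mul, mul_one,
      eq_comm, add_eq_right] at key
    exact eq_zero_of_X_mul_eq_zero key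
  exact pderiv.ext (fun m => by rw [hpderiv, pderiv_one])
    (by rw [constantCoeff_abhyankarOp, map_one])

lemma hasSubst_X_sub : HasSubst fun a => X a - H a :=
  hasSubst_of_constantCoeff_zero fun a =>
    one_le_order_iff_constCoeff_eq_zero.1 (one_le_order_X_sub hH a)

theorem abhyankarOp_subst [DecidableEq σ] [IsAddTorsionFree R]
    (hdet : (Matrix.of fun k j => pderiv R k (X j - H j)).det = 1) (U : MvPowerSeries σ R) :
    abhyankarOp H hH (subst (fun a => X a - H a) U) = U := by
  ext μ
  set S := (Finsupp.finite_of_degree_le (σ := σ) μ.degree).toFinset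
  set P := ∑ s ∈ S, coeff s U • ∏ a, (X a - H a) ^ s a
  -- `U(F)` agrees with its truncation `P` up to degree `|μ|`, and `T` does not decrease orders
  have hclose : (μ.degree : ℕ∞) < (subst (fun a => X a - H a) U - P).order := by
    refine lt_of_lt_of_le (by exact_mod_cast Nat.lt_succ_self _) (nat_le_order fun d hd => ?_)
    rw [map_sub, coeff_subst_eq_sum (one_le_order_X_sub hH) U (Nat.lt_succ_iff.1 hd), sub_eq_zero]
    simp only [P, map_sum, map_smul, smul_eq_mul]
    rfl
  have hP : coeff μ (abhyankarOp H hH (subst (fun a => X a - H a) U))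
      = coeff μ (abhyankarOp H hH P) := by
    rw [← sub_eq_zero, ← map_sub, ← map_sub]
    exact coeff_of_lt_order (hclose.trans_le (le_order_abhyankarOp hH _))
  simp [hP, P, abhyankarOp_prod_pow_sub_X, abhyankarOp_one hH hdet, prod_X_pow_eq_monomial,
    coeff_monomial, S]

end AbhyankarOperator

end MvPowerSeries

lemma pd_eq_pderiv {L : Type*} [Field L] {m : ℕ} (a : Fin m) (f : MvPowerSeries (Fin m) L) :
    pd a f = pderiv L a f := by
  ext ν
  rw [coeff_pderiv]
  change ((ν a + 1 : ℕ) : L) * coeff (ν + Finsupp.single a 1) f = _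
  push_cast
  ring

lemma substF_eq_subst {L : Type*} [Field L] {m : ℕ} {u : Fin m → MvPowerSeries (Fin m) L}
    (hu : HasSubst u) (f : MvPowerSeries (Fin m) L) : substF u f = subst u f := by
  ext μ
  rw [coeff_subst hu, ← finsum_comp_equiv Finsupp.equivFunOnFinite.symm]
  refine finsum_congr fun p => ?_
  rw [Finsupp.prod_fintype _ _ fun _ => pow_zero _, smul_eq_mul]
  rfl

lemma coeff_Dmulti {L : Type*} [Field L] {m : ℕ} (p : Fin m → ℕ) (W : MvPowerSeries (Fin m) L)
    (μ : Fin m →₀ ℕ) :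
    coeff μ (Dmulti p W) = (∏ a, ((p a).factorial : L))
      * coeff μ (dividedPDeriv (Finsupp.equivFunOnFinite.symm p) W) := by
  rw [coeff_dividedPDeriv, ← mul_assoc, prodChoose, Nat.cast_prod, ← Finset.prod_mul_distrib]
  change (∏ i, (((μ i + p i).factorial / (μ i).factorial : ℕ) : L)) * _ = _
  congr 1
  refine Finset.prod_congr rfl fun i _ => ?_
  have h : (μ i + p i).factorial
      = (μ i + p i).choose (p i) * (p i).factorial * (μ i).factorial := by
    rw [← Nat.add_choose_mul_factorial_mul_factorial]
    ring
  rw [Nat.div_eq_of_eq_mul_left (Nat.factorial_pos _) h]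
  simp [mul_comm]

/-- **general Abhyankar formula.** If `Fᵢ = xᵢ − Hᵢ` with `Hᵢ`
of order ≥ 2 and `j(F) = 1`, then for every `U ∈ K[[x₁,…,xₙ]]`,
`U = Σ_{p∈ℕⁿ} ∂^p (U(F) · H^p) / p!` (the sum converging m-adically, i.e.
computed coefficientwise). -/
theorem abhyankar_general
    (H : Fin n → MvPowerSeries (Fin n) K)
    (hH : ∀ i (μ : Fin n →₀ ℕ), dgF μ < 2 → MvPowerSeries.coeff μ (H i) = 0)
    (hjac : Matrix.det (Matrix.of fun a b =>
      pd a (MvPowerSeries.X b - H b)) = (1 : MvPowerSeries (Fin n) K)) :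
    ∀ U : MvPowerSeries (Fin n) K, U = fun μ => ∑ᶠ (p : Fin n → ℕ),
      (∏ a, (((p a).factorial : K)))⁻¹ *
        MvPowerSeries.coeff μ
          (Dmulti p (substF (fun j => MvPowerSeries.X j - H j) U * ∏ a, (H a) ^ (p a))) := by
  intro U
  have hord : ∀ i, 2 ≤ (H i).order := fun i => by exact_mod_cast nat_le_order (hH i)
  have hdet : (Matrix.of fun k j => pderiv K k (X j - H j)).det = 1 := by
    simpa only [pd_eq_pderiv] using hjac
  have hfact : ∀ p : Fin n → ℕ, (∏ a, ((p a).factorial : K)) ≠ 0 := fun p =>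
    Finset.prod_ne_zero_iff.2 fun a _ => Nat.cast_ne_zero.2 (Nat.factorial_ne_zero _)
  funext μ
  rw [substF_eq_subst (hasSubst_X_sub hord)]
  change coeff μ U = _
  conv_lhs => rw [← abhyankarOp_subst hord hdet U]
  rw [abhyankarOp_apply, coeff_coeffFinsum, ← finsum_comp_equiv Finsupp.equivFunOnFinite.symm]
  refine finsum_congr fun p => ?_
  rw [coeff_Dmulti, inv_mul_cancel_left₀ (hfact p)]
  simp

end
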